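/- arXiv:math/0304182 — 5 statements merged into one kernel-verified Lean document; each statement's English description precedes it below -/
import Mathlib

section
/- Let (V, ω_V) and (W, ω_W) be finite-dimensional symplectic vector spaces, Γ ⊆ V × W⁻ a Lagrangian subspace, and Σ ⊆ W an isotropic subspace. Then Γ∘Σ is an isotropic subspace of V, and U₁ := {w ∈ Σ° : (0,w) ∈ Γ} is an isotropic subspace of W. -/
/-!
For `(v, w), (v', w') ∈ Γ ⊆ Γ°` we have `ω_V(v, v') = ω_W(w, w')`. The right-hand side vanishes
when `w, w' ∈ Σ`, which makes `Γ∘Σ` isotropic, and the left-hand side vanishes when `v = v' = 0`,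
which makes `{w : (0, w) ∈ Γ}`, and hence its subspace `U₁`, isotropic.
-/

/-- The symplectic orthogonal `S° = {v ∈ V : ω(s,v) = 0 for all s ∈ S}` of a subspace `S`. -/
def symplOrth {V : Type*} [AddCommGroup V] [Module ℝ V]
    (ω : V →ₗ[ℝ] V →ₗ[ℝ] ℝ) (S : Submodule ℝ V) : Submodule ℝ V where
  carrier := {v | ∀ s ∈ S, ω s v = 0}
  add_mem' := by
    intro a b ha hb s hs
    simp [ha s hs, hb s hs]
  zero_mem' := by intro s hs; simp
  smul_mem' := by
    intro c a ha s hs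
    simp [ha s hs]

/-- The twisted product symplectic form on `V × W⁻`:
`((v,w),(v',w')) ↦ ω_V(v,v') − ω_W(w,w')`. -/
def prodForm {V W : Type*} [AddCommGroup V] [Module ℝ V] [AddCommGroup W] [Module ℝ W]
    (ωV : V →ₗ[ℝ] V →ₗ[ℝ] ℝ) (ωW : W →ₗ[ℝ] W →ₗ[ℝ] ℝ) :
    (V × W) →ₗ[ℝ] (V × W) →ₗ[ℝ] ℝ :=
  LinearMap.mk₂ ℝ (fun p q => ωV p.1 q.1 - ωW p.2 q.2)
    (by intro p p' q; simp; ring)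
    (by intro c p q; simp; ring)
    (by intro p q q'; simp; ring)
    (by intro c p q; simp; ring)

/-- The composition `Γ∘Σ = {v ∈ V : ∃ w ∈ Σ, (v,w) ∈ Γ}` of a linear canonical relation
`Γ ⊆ V × W⁻` with a subspace `Σ ⊆ W`. -/
def gammaComp {V W : Type*} [AddCommGroup V] [Module ℝ V] [AddCommGroup W] [Module ℝ W]
    (Γ : Submodule ℝ (V × W)) (S : Submodule ℝ W) : Submodule ℝ V where
  carrier := {v | ∃ w ∈ S, (v, w) ∈ Γ}
  add_mem' := by
    rintro a b ⟨wa, hwa, ha⟩ ⟨wb, hwb, hb⟩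
    exact ⟨wa + wb, S.add_mem hwa hwb, Γ.add_mem ha hb⟩
  zero_mem' := ⟨0, S.zero_mem, Γ.zero_mem⟩
  smul_mem' := by
    rintro c a ⟨w, hw, h⟩
    exact ⟨c • w, S.smul_mem c hw, by simpa [Prod.smul_mk] using Γ.smul_mem c h⟩

section Isotropic

variable {V W : Type*} [AddCommGroup V] [Module ℝ V] [AddCommGroup W] [Module ℝ W]

@[simp]
lemma prodForm_apply (ωV : V →ₗ[ℝ] V →ₗ[ℝ] ℝ) (ωW : W →ₗ[ℝ] W →ₗ[ℝ] ℝ) (p q : V × W) :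
    prodForm ωV ωW p q = ωV p.1 q.1 - ωW p.2 q.2 :=
  rfl

lemma symplOrth_antitone (ω : V →ₗ[ℝ] V →ₗ[ℝ] ℝ) : Antitone (symplOrth ω) :=
  fun _ _ hST _ hv s hs => hv s (hST hs)

lemma le_symplOrth_self_of_le {ω : V →ₗ[ℝ] V →ₗ[ℝ] ℝ} {S T : Submodule ℝ V} (hST : S ≤ T)
    (hT : T ≤ symplOrth ω T) : S ≤ symplOrth ω S :=
  (hST.trans hT).trans (symplOrth_antitone ω hST)

variable {ωV : V →ₗ[ℝ] V →ₗ[ℝ] ℝ} {ωW : W →ₗ[ℝ] W →ₗ[ℝ] ℝ} {Γ : Submodule ℝ (V × W)}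

lemma gammaComp_le_symplOrth_self (hΓ : Γ ≤ symplOrth (prodForm ωV ωW) Γ) {S : Submodule ℝ W}
    (hS : S ≤ symplOrth ωW S) : gammaComp Γ S ≤ symplOrth ωV (gammaComp Γ S) := by
  rintro v ⟨w, hw, hvw⟩ v' ⟨w', hw', hv'w'⟩
  have h := hΓ hvw (v', w') hv'w'
  rwa [prodForm_apply, hS hw w' hw', sub_zero] at h

lemma comap_inr_le_symplOrth_self (hΓ : Γ ≤ symplOrth (prodForm ωV ωW) Γ) :
    Γ.comap (LinearMap.inr ℝ V W) ≤ symplOrth ωW (Γ.comap (LinearMap.inr ℝ V W)) := by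
  intro w hw w' hw'
  have h := hΓ hw (0, w') hw'
  simpa using h

end Isotropic

theorem stmt4_general {V W : Type*}
    [AddCommGroup V] [Module ℝ V]
    [AddCommGroup W] [Module ℝ W]
    (ωV : V →ₗ[ℝ] V →ₗ[ℝ] ℝ) (ωW : W →ₗ[ℝ] W →ₗ[ℝ] ℝ)
    (Γ : Submodule ℝ (V × W)) (hΓ : Γ = symplOrth (prodForm ωV ωW) Γ)
    (S : Submodule ℝ W) (hS : S ≤ symplOrth ωW S) :
    gammaComp Γ S ≤ symplOrth ωV (gammaComp Γ S) ∧
    (symplOrth ωW S ⊓ Γ.comap (LinearMap.inr ℝ V W)) ≤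
      symplOrth ωW (symplOrth ωW S ⊓ Γ.comap (LinearMap.inr ℝ V W)) :=
  ⟨gammaComp_le_symplOrth_self hΓ.le hS,
    le_symplOrth_self_of_le inf_le_right (comap_inr_le_symplOrth_self hΓ.le)⟩

/-- If `Γ ⊆ V × W⁻` is Lagrangian and `Σ ⊆ W` is isotropic, then `Γ∘Σ` is isotropic in `V`
and `U₁ = {w ∈ Σ° : (0,w) ∈ Γ}` is isotropic in `W`. -/
theorem stmt4 {V W : Type*}
    [AddCommGroup V] [Module ℝ V] [FiniteDimensional ℝ V]
    [AddCommGroup W] [Module ℝ W] [FiniteDimensional ℝ W]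
    (ωV : V →ₗ[ℝ] V →ₗ[ℝ] ℝ) (ωW : W →ₗ[ℝ] W →ₗ[ℝ] ℝ)
    (haltV : ∀ v, ωV v v = 0) (hndV : ∀ v, (∀ w, ωV v w = 0) → v = 0)
    (haltW : ∀ w, ωW w w = 0) (hndW : ∀ w, (∀ w', ωW w w' = 0) → w = 0)
    (Γ : Submodule ℝ (V × W)) (hΓ : Γ = symplOrth (prodForm ωV ωW) Γ)
    (S : Submodule ℝ W) (hS : S ≤ symplOrth ωW S) :
    gammaComp Γ S ≤ symplOrth ωV (gammaComp Γ S) ∧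
    (symplOrth ωW S ⊓ Γ.comap (LinearMap.inr ℝ V W)) ≤
      symplOrth ωW (symplOrth ωW S ⊓ Γ.comap (LinearMap.inr ℝ V W)) :=
  stmt4_general ωV ωW Γ hΓ S hS
end

section
/- Let (V, ω_V) and (W, ω_W) be finite-dimensional symplectic vector spaces, Γ ⊆ V × W⁻ a Lagrangian subspace, Σ ⊆ W an isotropic subspace, and assume U₀ = {0}. Set M := {w ∈ Σ° : ω_W(w,u) = 0 for all u ∈ U₁}. Then U₁ + Σ ⊆ M, ω_W vanishes on pairs from M × (U₁ + Σ), and there is a linear isomorphism T : M/(U₁ + Σ) → (Γ∘Σ)°/(Γ∘Σ) under which the bilinear form induced by ω_W on M/(U₁ + Σ) corresponds to the bilinear form induced by ω_V on (Γ∘Σ)°/(Γ∘Σ); i.e., whenever T[w] = [v] and T[w'] = [v'] one has ω_W(w,w') = ω_V(v,v'). -/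
/-! Write `C := U₁ + Σ`. Then `M = C°` and `C` is isotropic, so `ω_W` descends to `C°/C`, just as
`ω_V` descends to `(Γ∘Σ)°/(Γ∘Σ)`. The isomorphism is `Γ` itself: the pairs `(v, w) ∈ Γ` with
`v ∈ (Γ∘Σ)°` and `w ∈ C°` meet every class on both sides, and for such a pair `w ∈ C` iff
`v ∈ Γ∘Σ`, so they form the graph of a linear isomorphism of the quotients. Surjectivity on both
sides rests on `Γ` being Lagrangian, through `(Γ ∩ (V × 0))° = pr_V Γ` and
`(Γ ∩ (0 × W))° = pr_W Γ`; the forms correspond because `ω_V(v, v') = ω_W(w, w')` on `Γ`. -/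

section SymplOrth

variable {X : Type*} [AddCommGroup X] [Module ℝ X] {ω : X →ₗ[ℝ] X →ₗ[ℝ] ℝ}

theorem apply_eq_zero_of_mem_symplOrth (hω : ω.IsAlt) {A : Submodule ℝ X} {x a : X}
    (hx : x ∈ symplOrth ω A) (ha : a ∈ A) : ω x a = 0 := by
  rw [← hω.neg, hx a ha, neg_zero]

theorem symplOrth_flip (hω : ω.IsAlt) (A : Submodule ℝ X) :
    symplOrth ω.flip A = symplOrth ω A := by
  ext x
  refine forall₂_congr fun a _ => ?_
  rw [LinearMap.flip_apply, ← hω.neg, neg_eq_zero]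

theorem symplOrth_le_symplOrth {A B : Submodule ℝ X} (h : A ≤ B) :
    symplOrth ω B ≤ symplOrth ω A :=
  Submodule.orthogonalBilin_le h

theorem symplOrth_sup (A B : Submodule ℝ X) :
    symplOrth ω (A ⊔ B) = symplOrth ω A ⊓ symplOrth ω B := by
  refine le_antisymm
    (le_inf (symplOrth_le_symplOrth le_sup_left) (symplOrth_le_symplOrth le_sup_right)) ?_
  rintro x ⟨hxA, hxB⟩ y hy
  obtain ⟨a, ha, b, hb, rfl⟩ := Submodule.mem_sup.mp hy
  rw [map_add, LinearMap.add_apply, hxA a ha, hxB b hb, add_zero]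

theorem symplOrth_symplOrth [FiniteDimensional ℝ X] (hω : ω.IsAlt) (hnd : ω.SeparatingLeft)
    (A : Submodule ℝ X) : symplOrth ω (symplOrth ω A) = A :=
  LinearMap.BilinForm.orthogonal_orthogonal
    (hω.isRefl.nondegenerate_iff_separatingLeft.mpr hnd) hω.isRefl A

theorem symplOrth_inf [FiniteDimensional ℝ X] (hω : ω.IsAlt) (hnd : ω.SeparatingLeft)
    (A B : Submodule ℝ X) : symplOrth ω (A ⊓ B) = symplOrth ω A ⊔ symplOrth ω B := by
  conv_lhs => rw [← symplOrth_symplOrth hω hnd A, ← symplOrth_symplOrth hω hnd B,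
    ← symplOrth_sup, symplOrth_symplOrth hω hnd]

theorem apply_eq_apply_of_mk_eq (hω : ω.IsAlt) {C : Submodule ℝ X} {x y x' y' : symplOrth ω C}
    (h : (Submodule.Quotient.mk x : symplOrth ω C ⧸ C.comap (symplOrth ω C).subtype) =
      Submodule.Quotient.mk y)
    (h' : (Submodule.Quotient.mk x' : symplOrth ω C ⧸ C.comap (symplOrth ω C).subtype) =
      Submodule.Quotient.mk y') :
    ω x x' = ω y y' := by
  rw [Submodule.Quotient.eq, Submodule.mem_comap] at h h'
  have h₁ : ω x (x' - y') = 0 := apply_eq_zero_of_mem_symplOrth hω x.2 h'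
  have h₂ : ω (x - y) y' = 0 := y'.2 _ h
  simp only [map_sub, LinearMap.sub_apply] at h₁ h₂
  linarith

end SymplOrth

theorem exists_quotientEquiv_of_forall_mem_iff {R A B : Type*} [Ring R]
    [AddCommGroup A] [Module R A] [AddCommGroup B] [Module R B]
    {C : Submodule R A} {D : Submodule R B} {G : Submodule R (A × B)}
    (hA : ∀ a, ∃ p ∈ G, a - p.1 ∈ C) (hB : ∀ b, ∃ p ∈ G, b - p.2 ∈ D)
    (hCD : ∀ p ∈ G, p.1 ∈ C ↔ p.2 ∈ D) :
    ∃ T : (B ⧸ D) ≃ₗ[R] (A ⧸ C), ∀ p ∈ G,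
      T (Submodule.Quotient.mk p.2) = Submodule.Quotient.mk p.1 := by
  set f : G →ₗ[R] A ⧸ C := C.mkQ ∘ₗ LinearMap.fst R A B ∘ₗ G.subtype
  set g : G →ₗ[R] B ⧸ D := D.mkQ ∘ₗ LinearMap.snd R A B ∘ₗ G.subtype
  have hf : Function.Surjective f := by
    rintro ⟨a⟩
    obtain ⟨p, hp, ha⟩ := hA a
    exact ⟨⟨p, hp⟩, ((Submodule.Quotient.eq C).mpr ha).symm⟩
  have hg : Function.Surjective g := by
    rintro ⟨b⟩
    obtain ⟨p, hp, hb⟩ := hB b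
    exact ⟨⟨p, hp⟩, ((Submodule.Quotient.eq D).mpr hb).symm⟩
  have hker : LinearMap.ker g = LinearMap.ker f := by
    ext ⟨p, hp⟩
    simp only [LinearMap.mem_ker, f, g, LinearMap.comp_apply, Submodule.mkQ_apply,
      Submodule.Quotient.mk_eq_zero]
    exact (hCD p hp).symm
  refine ⟨(g.quotKerEquivOfSurjective hg).symm.trans
    ((Submodule.quotEquivOfEq _ _ hker).trans (f.quotKerEquivOfSurjective hf)), ?_⟩
  intro p hp
  have hgp : Submodule.Quotient.mk p.2 = g ⟨p, hp⟩ := rfl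
  rw [hgp, LinearEquiv.trans_apply, LinearMap.quotKerEquivOfSurjective_symm_apply]
  rfl

section Lagrangian

variable {V W : Type*} [AddCommGroup V] [Module ℝ V] [AddCommGroup W] [Module ℝ W]
  {ωV : V →ₗ[ℝ] V →ₗ[ℝ] ℝ} {ωW : W →ₗ[ℝ] W →ₗ[ℝ] ℝ} {Γ : Submodule ℝ (V × W)}

theorem apply_fst_eq_apply_snd_of_mem (hΓ : Γ ≤ symplOrth (prodForm ωV ωW) Γ) {p q : V × W}
    (hp : p ∈ Γ) (hq : q ∈ Γ) : ωV p.1 q.1 = ωW p.2 q.2 :=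
  sub_eq_zero.mp (hΓ hq p hp)

theorem mem_of_forall_apply_fst_eq_apply_snd (hΓ : symplOrth (prodForm ωV ωW) Γ ≤ Γ)
    {p : V × W} (h : ∀ q ∈ Γ, ωV q.1 p.1 = ωW q.2 p.2) : p ∈ Γ :=
  hΓ fun q hq => sub_eq_zero.mpr (h q hq)

theorem comap_inl_eq_symplOrth_map_fst (hΓ : Γ = symplOrth (prodForm ωV ωW) Γ) :
    Γ.comap (LinearMap.inl ℝ V W) = symplOrth ωV (Γ.map (LinearMap.fst ℝ V W)) := by
  ext v
  constructor
  · rintro hv _ ⟨q, hq, rfl⟩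
    simpa using apply_fst_eq_apply_snd_of_mem hΓ.le hq hv
  · intro hv
    exact mem_of_forall_apply_fst_eq_apply_snd hΓ.ge fun q hq => by
      simpa using hv _ ⟨q, hq, rfl⟩

theorem comap_inr_eq_symplOrth_map_snd (hΓ : Γ = symplOrth (prodForm ωV ωW) Γ) :
    Γ.comap (LinearMap.inr ℝ V W) = symplOrth ωW (Γ.map (LinearMap.snd ℝ V W)) := by
  ext w
  constructor
  · rintro hw _ ⟨q, hq, rfl⟩
    simpa using (apply_fst_eq_apply_snd_of_mem hΓ.le hq hw).symm
  · intro hw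
    exact mem_of_forall_apply_fst_eq_apply_snd hΓ.ge fun q hq => by
      simpa using (hw _ ⟨q, hq, rfl⟩).symm

end Lagrangian

section Reduction

variable {V W : Type*} [AddCommGroup V] [Module ℝ V] [AddCommGroup W] [Module ℝ W]
  {ωV : V →ₗ[ℝ] V →ₗ[ℝ] ℝ} {ωW : W →ₗ[ℝ] W →ₗ[ℝ] ℝ} {Γ : Submodule ℝ (V × W)}
  {S : Submodule ℝ W}

local notation "U₁" => symplOrth ωW S ⊓ Γ.comap (LinearMap.inr ℝ V W)

theorem sup_le_symplOrth_sup (hωW : ωW.IsAlt) (hΓ : Γ ≤ symplOrth (prodForm ωV ωW) Γ)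
    (hS : S ≤ symplOrth ωW S) : U₁ ⊔ S ≤ symplOrth ωW (U₁ ⊔ S) := by
  rw [symplOrth_sup]
  refine sup_le (le_inf (fun u hu u' hu' => ?_) inf_le_left)
    (le_inf (fun s hs u hu => apply_eq_zero_of_mem_symplOrth hωW hu.1 hs) hS)
  simpa using (apply_fst_eq_apply_snd_of_mem hΓ hu'.2 hu.2).symm

theorem mem_symplOrth_gammaComp (hΓ : Γ ≤ symplOrth (prodForm ωV ωW) Γ) {v : V} {w : W}
    (hvw : (v, w) ∈ Γ) (hw : w ∈ symplOrth ωW S) : v ∈ symplOrth ωV (gammaComp Γ S) := by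
  rintro g ⟨s, hs, hgs⟩
  rw [apply_fst_eq_apply_snd_of_mem hΓ hgs hvw]
  exact hw s hs

theorem mem_symplOrth_sup (hΓ : Γ ≤ symplOrth (prodForm ωV ωW) Γ) {v : V} {w : W}
    (hvw : (v, w) ∈ Γ) (hw : w ∈ symplOrth ωW S) : w ∈ symplOrth ωW (U₁ ⊔ S) := by
  rw [symplOrth_sup]
  refine ⟨fun u hu => ?_, hw⟩
  simpa using (apply_fst_eq_apply_snd_of_mem hΓ hu.2 hvw).symm

theorem mem_sup_iff_mem_gammaComp (hS : S ≤ symplOrth ωW S) {v : V} {w : W}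
    (hvw : (v, w) ∈ Γ) (hw : w ∈ symplOrth ωW S) : w ∈ U₁ ⊔ S ↔ v ∈ gammaComp Γ S := by
  constructor
  · intro h
    obtain ⟨u, hu, s, hs, rfl⟩ := Submodule.mem_sup.mp h
    exact ⟨s, hs, by simpa using Γ.sub_mem hvw hu.2⟩
  · rintro ⟨s, hs, hvs⟩
    have hws : w - s ∈ U₁ := ⟨sub_mem hw (hS hs), by simpa using Γ.sub_mem hvw hvs⟩
    simpa using add_mem (Submodule.mem_sup_left hws) (Submodule.mem_sup_right hs)

theorem exists_mem_sub_mem_of_mem_symplOrth_sup [FiniteDimensional ℝ W] (hωW : ωW.IsAlt)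
    (hndW : ωW.SeparatingLeft) (hΓ : Γ = symplOrth (prodForm ωV ωW) Γ) {w : W}
    (hw : w ∈ symplOrth ωW (U₁ ⊔ S)) : ∃ p ∈ Γ, w - p.2 ∈ S := by
  rw [symplOrth_sup, symplOrth_inf hωW hndW, symplOrth_symplOrth hωW hndW,
    comap_inr_eq_symplOrth_map_snd hΓ, symplOrth_symplOrth hωW hndW] at hw
  obtain ⟨s, hs, _, ⟨p, hp, rfl⟩, rfl⟩ := Submodule.mem_sup.mp hw.1
  exact ⟨p, hp, by simpa using hs⟩

theorem exists_mem_of_mem_symplOrth_gammaComp [FiniteDimensional ℝ V] [FiniteDimensional ℝ W]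
    (hωV : ωV.IsAlt) (hndV : ωV.SeparatingLeft) (hωW : ωW.IsAlt) (hndW : ωW.SeparatingLeft)
    (hΓ : Γ = symplOrth (prodForm ωV ωW) Γ) {v : V} (hv : v ∈ symplOrth ωV (gammaComp Γ S)) :
    ∃ w ∈ symplOrth ωW S, (v, w) ∈ Γ := by
  have hv_fst : v ∈ Γ.map (LinearMap.fst ℝ V W) := by
    rw [← symplOrth_symplOrth hωV hndV (Γ.map _), ← comap_inl_eq_symplOrth_map_fst hΓ]
    exact fun k hk => hv k ⟨0, S.zero_mem, hk⟩
  obtain ⟨⟨_, w₀⟩, hw₀, rfl⟩ := hv_fst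
  have hw₀_orth : w₀ ∈ symplOrth ωW (S ⊓ Γ.map (LinearMap.snd ℝ V W)) := by
    rintro s ⟨hs, ⟨v', s'⟩, hv', rfl⟩
    show ωW s' w₀ = 0
    rw [← apply_fst_eq_apply_snd_of_mem hΓ.le hv' hw₀]
    exact hv v' ⟨s', hs, hv'⟩
  rw [symplOrth_inf hωW hndW, ← comap_inr_eq_symplOrth_map_snd hΓ] at hw₀_orth
  obtain ⟨w, hw, k, hk, rfl⟩ := Submodule.mem_sup.mp hw₀_orth
  exact ⟨w, hw, by simpa using Γ.sub_mem hw₀ hk⟩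

variable (ωV ωW Γ S) in
def reductionRel : Submodule ℝ (symplOrth ωV (gammaComp Γ S) × symplOrth ωW (U₁ ⊔ S)) :=
  Γ.comap ((Submodule.subtype _).prodMap (Submodule.subtype _))

theorem exists_mem_reductionRel_sub_mem [FiniteDimensional ℝ W] (hωW : ωW.IsAlt)
    (hndW : ωW.SeparatingLeft) (hΓ : Γ = symplOrth (prodForm ωV ωW) Γ)
    (hS : S ≤ symplOrth ωW S) (w : symplOrth ωW (U₁ ⊔ S)) :
    ∃ p ∈ reductionRel ωV ωW Γ S, w - p.2 ∈ (U₁ ⊔ S).comap (Submodule.subtype _) := by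
  obtain ⟨⟨v, b⟩, hvb, hwb⟩ := exists_mem_sub_mem_of_mem_symplOrth_sup hωW hndW hΓ w.2
  have hw : (w : W) ∈ symplOrth ωW S := symplOrth_le_symplOrth le_sup_right w.2
  have hb : b ∈ symplOrth ωW S := by simpa using sub_mem hw (hS hwb)
  refine ⟨(⟨v, mem_symplOrth_gammaComp hΓ.le hvb hb⟩, ⟨b, mem_symplOrth_sup hΓ.le hvb hb⟩),
    hvb, Submodule.mem_sup_right hwb⟩

theorem exists_reductionEquiv [FiniteDimensional ℝ V] [FiniteDimensional ℝ W]
    (hωV : ωV.IsAlt) (hndV : ωV.SeparatingLeft) (hωW : ωW.IsAlt) (hndW : ωW.SeparatingLeft)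
    (hΓ : Γ = symplOrth (prodForm ωV ωW) Γ) (hS : S ≤ symplOrth ωW S) :
    ∃ T : (symplOrth ωW (U₁ ⊔ S) ⧸ (U₁ ⊔ S).comap (Submodule.subtype _)) ≃ₗ[ℝ]
        (symplOrth ωV (gammaComp Γ S) ⧸ (gammaComp Γ S).comap (Submodule.subtype _)),
      ∀ p ∈ reductionRel ωV ωW Γ S,
        T (Submodule.Quotient.mk p.2) = Submodule.Quotient.mk p.1 := by
  refine exists_quotientEquiv_of_forall_mem_iff (fun v => ?_)
    (exists_mem_reductionRel_sub_mem hωW hndW hΓ hS) fun p hp => ?_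
  · obtain ⟨w, hw, hvw⟩ := exists_mem_of_mem_symplOrth_gammaComp hωV hndV hωW hndW hΓ v.2
    exact ⟨(v, ⟨w, mem_symplOrth_sup hΓ.le hvw hw⟩), hvw, by simp⟩
  · exact (mem_sup_iff_mem_gammaComp hS hp
      (symplOrth_le_symplOrth le_sup_right p.2.2)).symm

end Reduction

theorem stmt5_general {V W : Type*}
    [AddCommGroup V] [Module ℝ V] [FiniteDimensional ℝ V]
    [AddCommGroup W] [Module ℝ W] [FiniteDimensional ℝ W]
    (ωV : V →ₗ[ℝ] V →ₗ[ℝ] ℝ) (ωW : W →ₗ[ℝ] W →ₗ[ℝ] ℝ)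
    (haltV : ∀ v, ωV v v = 0) (hndV : ∀ v, (∀ w, ωV v w = 0) → v = 0)
    (haltW : ∀ w, ωW w w = 0) (hndW : ∀ w, (∀ w', ωW w w' = 0) → w = 0)
    (Γ : Submodule ℝ (V × W)) (hΓ : Γ = symplOrth (prodForm ωV ωW) Γ)
    (S : Submodule ℝ W) (hS : S ≤ symplOrth ωW S)
    (U1 : Submodule ℝ W) (hU1 : U1 = symplOrth ωW S ⊓ Γ.comap (LinearMap.inr ℝ V W))
    (M : Submodule ℝ W) (hM : M = symplOrth ωW S ⊓ symplOrth (ωW.flip) U1)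
    (GS : Submodule ℝ V) (hGS : GS = gammaComp Γ S) :
    U1 ⊔ S ≤ M ∧
    (∀ w ∈ M, ∀ w' ∈ U1 ⊔ S, ωW w w' = 0) ∧
    ∃ T : (M ⧸ ((U1 ⊔ S).comap M.subtype)) ≃ₗ[ℝ]
          ((symplOrth ωV GS) ⧸ (GS.comap (symplOrth ωV GS).subtype)),
      ∀ (w w' : M) (v v' : symplOrth ωV GS),
        T (Submodule.Quotient.mk w) = Submodule.Quotient.mk v →
        T (Submodule.Quotient.mk w') = Submodule.Quotient.mk v' →
        ωW w w' = ωV v v' := by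
  obtain rfl : M = symplOrth ωW (U1 ⊔ S) := by
    rw [hM, symplOrth_flip haltW, symplOrth_sup, inf_comm]
  subst hU1 hGS
  refine ⟨sup_le_symplOrth_sup haltW hΓ.le hS,
    fun w hw w' hw' => apply_eq_zero_of_mem_symplOrth haltW hw hw', ?_⟩
  obtain ⟨T, hT⟩ := exists_reductionEquiv haltV hndV haltW hndW hΓ hS
  refine ⟨T, fun w w' v v' hTw hTw' => ?_⟩
  obtain ⟨p, hp, hwp⟩ := exists_mem_reductionRel_sub_mem haltW hndW hΓ hS w
  obtain ⟨p', hp', hwp'⟩ := exists_mem_reductionRel_sub_mem haltW hndW hΓ hS w'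
  rw [(Submodule.Quotient.eq _).mpr hwp, hT p hp] at hTw
  rw [(Submodule.Quotient.eq _).mpr hwp', hT p' hp'] at hTw'
  calc ωW w w' = ωW p.2 p'.2 :=
        apply_eq_apply_of_mk_eq haltW ((Submodule.Quotient.eq _).mpr hwp)
          ((Submodule.Quotient.eq _).mpr hwp')
    _ = ωV p.1 p'.1 := (apply_fst_eq_apply_snd_of_mem hΓ.le hp hp').symm
    _ = ωV v v' := apply_eq_apply_of_mk_eq haltV hTw hTw'

/-- Symplectic reduction: with `U₀ = 0`, letting `M = {w ∈ Σ° : ω_W(w,u) = 0 ∀ u ∈ U₁}`,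
one has `U₁ + Σ ⊆ M`, `ω_W` vanishes on `M × (U₁ + Σ)`, and `M/(U₁+Σ)` is linearly and
symplectically isomorphic to `(Γ∘Σ)°/(Γ∘Σ)`. -/
theorem stmt5 {V W : Type*}
    [AddCommGroup V] [Module ℝ V] [FiniteDimensional ℝ V]
    [AddCommGroup W] [Module ℝ W] [FiniteDimensional ℝ W]
    (ωV : V →ₗ[ℝ] V →ₗ[ℝ] ℝ) (ωW : W →ₗ[ℝ] W →ₗ[ℝ] ℝ)
    (haltV : ∀ v, ωV v v = 0) (hndV : ∀ v, (∀ w, ωV v w = 0) → v = 0)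
    (haltW : ∀ w, ωW w w = 0) (hndW : ∀ w, (∀ w', ωW w w' = 0) → w = 0)
    (Γ : Submodule ℝ (V × W)) (hΓ : Γ = symplOrth (prodForm ωV ωW) Γ)
    (S : Submodule ℝ W) (hS : S ≤ symplOrth ωW S)
    (hU0 : S ⊓ Γ.comap (LinearMap.inr ℝ V W) = ⊥)
    (U1 : Submodule ℝ W) (hU1 : U1 = symplOrth ωW S ⊓ Γ.comap (LinearMap.inr ℝ V W))
    (M : Submodule ℝ W) (hM : M = symplOrth ωW S ⊓ symplOrth (ωW.flip) U1)
    (GS : Submodule ℝ V) (hGS : GS = gammaComp Γ S) :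
    U1 ⊔ S ≤ M ∧
    (∀ w ∈ M, ∀ w' ∈ U1 ⊔ S, ωW w w' = 0) ∧
    ∃ T : (M ⧸ ((U1 ⊔ S).comap M.subtype)) ≃ₗ[ℝ]
          ((symplOrth ωV GS) ⧸ (GS.comap (symplOrth ωV GS).subtype)),
      ∀ (w w' : M) (v v' : symplOrth ωV GS),
        T (Submodule.Quotient.mk w) = Submodule.Quotient.mk v →
        T (Submodule.Quotient.mk w') = Submodule.Quotient.mk v' →
        ωW w w' = ωV v v' :=
  stmt5_general ωV ωW haltV hndV haltW hndW Γ hΓ S hS U1 hU1 M hM GS hGS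
end

section
/- Let (V, ω_V) and (W, ω_W) be finite-dimensional symplectic vector spaces, Γ ⊆ V × W⁻ a Lagrangian subspace, Σ ⊆ W an isotropic subspace, and assume U₀ = {0}. Define ρ on the space of pairs ((v,w), w₁) with (v,w) ∈ Γ and w₁ ∈ Σ by ρ((v,w), w₁) := w − w₁. Then: (i) the range of ρ is exactly U₁°, the symplectic orthogonal of U₁ in W; and (ii) the map ker(ρ) → V sending ((v,w), w) ↦ v is injective with image Γ∘Σ, so ker(ρ) is linearly isomorphic to Γ∘Σ. -/
/-- The map `ρ : Γ ⊕ Σ → W`, `ρ((v,w),w₁) = w − w₁`. -/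
def rhoMap {V W : Type*} [AddCommGroup V] [Module ℝ V] [AddCommGroup W] [Module ℝ W]
    (Γ : Submodule ℝ (V × W)) (S : Submodule ℝ W) : (Γ × S) →ₗ[ℝ] W :=
  (LinearMap.snd ℝ V W).comp (Γ.subtype.comp (LinearMap.fst ℝ Γ S)) -
    S.subtype.comp (LinearMap.snd ℝ Γ S)

/-- The projection `Γ ⊕ Σ → V`, `((v,w),w₁) ↦ v`. -/
def piMap {V W : Type*} [AddCommGroup V] [Module ℝ V] [AddCommGroup W] [Module ℝ W]
    (Γ : Submodule ℝ (V × W)) (S : Submodule ℝ W) : (Γ × S) →ₗ[ℝ] V :=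
  (LinearMap.fst ℝ V W).comp (Γ.subtype.comp (LinearMap.fst ℝ Γ S))

theorem mem_symplOrth {V : Type*} [AddCommGroup V] [Module ℝ V]
    {ω : V →ₗ[ℝ] V →ₗ[ℝ] ℝ} {S : Submodule ℝ V} {v : V} :
    v ∈ symplOrth ω S ↔ ∀ s ∈ S, ω s v = 0 := Iff.rfl

theorem symplOrth_symplOrth_s6 {W : Type*} [AddCommGroup W] [Module ℝ W] [FiniteDimensional ℝ W]
    {ω : W →ₗ[ℝ] W →ₗ[ℝ] ℝ} (hrefl : ω.IsRefl) (hsep : ω.SeparatingLeft) (S : Submodule ℝ W) :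
    symplOrth ω (symplOrth ω S) = S :=
  LinearMap.BilinForm.orthogonal_orthogonal (hrefl.nondegenerate_iff_separatingLeft.mpr hsep)
    hrefl S

section RhoMap

variable {V W : Type*} [AddCommGroup V] [Module ℝ V] [AddCommGroup W] [Module ℝ W]
  {Γ : Submodule ℝ (V × W)} {S : Submodule ℝ W}

theorem rhoMap_apply (x : Γ × S) : rhoMap Γ S x = (x.1 : V × W).2 - x.2 := rfl

theorem mem_ker_rhoMap {x : Γ × S} : x ∈ LinearMap.ker (rhoMap Γ S) ↔ (x.1 : V × W).2 = x.2 :=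
  sub_eq_zero

theorem zero_mk_mem_iff_of_eq_symplOrth {ωV : V →ₗ[ℝ] V →ₗ[ℝ] ℝ} {ωW : W →ₗ[ℝ] W →ₗ[ℝ] ℝ}
    (hΓ : Γ = symplOrth (prodForm ωV ωW) Γ) {u : W} :
    ((0 : V), u) ∈ Γ ↔ ∀ q ∈ Γ, ωW q.2 u = 0 := by
  conv_lhs => rw [hΓ]
  refine forall₂_congr fun q _ ↦ ?_
  simp [prodForm]

theorem symplOrth_range_rhoMap {ωV : V →ₗ[ℝ] V →ₗ[ℝ] ℝ} {ωW : W →ₗ[ℝ] W →ₗ[ℝ] ℝ}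
    (hΓ : Γ = symplOrth (prodForm ωV ωW) Γ) :
    symplOrth ωW (LinearMap.range (rhoMap Γ S)) =
      symplOrth ωW S ⊓ Γ.comap (LinearMap.inr ℝ V W) := by
  ext u
  rw [Submodule.mem_inf, Submodule.mem_comap, LinearMap.inr_apply, zero_mk_mem_iff_of_eq_symplOrth hΓ]
  constructor
  · intro hu
    refine ⟨fun s hs ↦ ?_, fun q hq ↦ ?_⟩
    · simpa [rhoMap_apply] using hu _ (LinearMap.mem_range_self _ (0, ⟨s, hs⟩))
    · simpa [rhoMap_apply] using hu _ (LinearMap.mem_range_self _ (⟨q, hq⟩, 0))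
  · rintro ⟨huS, huΓ⟩ _ ⟨⟨⟨q, hq⟩, ⟨s, hs⟩⟩, rfl⟩
    rw [rhoMap_apply, map_sub, LinearMap.sub_apply, huS s hs, huΓ q hq, sub_zero]

theorem injective_piMap_comp_ker_rhoMap
    (hU0 : S ⊓ Γ.comap (LinearMap.inr ℝ V W) = ⊥) :
    Function.Injective ((piMap Γ S).comp (LinearMap.ker (rhoMap Γ S)).subtype) := by
  refine (injective_iff_map_eq_zero _).mpr ?_
  rintro ⟨⟨⟨⟨v, w⟩, hvw⟩, ⟨s, hs⟩⟩, hker⟩ (rfl : v = 0)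
  obtain rfl : w = s := mem_ker_rhoMap.mp hker
  obtain rfl : w = 0 := (Submodule.mem_bot ℝ).mp (hU0 ▸ Submodule.mem_inf.mpr ⟨hs, hvw⟩)
  rfl

theorem range_piMap_comp_ker_rhoMap :
    LinearMap.range ((piMap Γ S).comp (LinearMap.ker (rhoMap Γ S)).subtype) = gammaComp Γ S := by
  ext v
  constructor
  · rintro ⟨⟨⟨⟨⟨v, w⟩, hvw⟩, ⟨s, hs⟩⟩, hker⟩, rfl⟩
    obtain rfl : w = s := mem_ker_rhoMap.mp hker
    exact ⟨w, hs, hvw⟩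
  · rintro ⟨w, hw, hvw⟩
    exact ⟨⟨(⟨(v, w), hvw⟩, ⟨w, hw⟩), mem_ker_rhoMap.mpr rfl⟩, rfl⟩

end RhoMap

theorem stmt6_general {V W : Type*}
    [AddCommGroup V] [Module ℝ V]
    [AddCommGroup W] [Module ℝ W] [FiniteDimensional ℝ W]
    (ωV : V →ₗ[ℝ] V →ₗ[ℝ] ℝ) (ωW : W →ₗ[ℝ] W →ₗ[ℝ] ℝ)
    (haltW : ∀ w, ωW w w = 0) (hndW : ∀ w, (∀ w', ωW w w' = 0) → w = 0)
    (Γ : Submodule ℝ (V × W)) (hΓ : Γ = symplOrth (prodForm ωV ωW) Γ)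
    (S : Submodule ℝ W)
    (hU0 : S ⊓ Γ.comap (LinearMap.inr ℝ V W) = ⊥)
    (U1 : Submodule ℝ W) (hU1 : U1 = symplOrth ωW S ⊓ Γ.comap (LinearMap.inr ℝ V W)) :
    LinearMap.range (rhoMap Γ S) = symplOrth ωW U1 ∧
    Function.Injective ((piMap Γ S).comp (LinearMap.ker (rhoMap Γ S)).subtype) ∧
    LinearMap.range ((piMap Γ S).comp (LinearMap.ker (rhoMap Γ S)).subtype) =
      gammaComp Γ S ∧
    Nonempty ((LinearMap.ker (rhoMap Γ S)) ≃ₗ[ℝ] (gammaComp Γ S)) := by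
  have hrange : LinearMap.range (rhoMap Γ S) = symplOrth ωW U1 := by
    rw [hU1, ← symplOrth_range_rhoMap hΓ,
      symplOrth_symplOrth_s6 (LinearMap.IsAlt.isRefl haltW) hndW]
  have hinj := injective_piMap_comp_ker_rhoMap hU0
  have himage := range_piMap_comp_ker_rhoMap (Γ := Γ) (S := S)
  exact ⟨hrange, hinj, himage,
    ⟨(LinearEquiv.ofInjective _ hinj).trans (LinearEquiv.ofEq _ _ himage)⟩⟩

/-- With `U₀ = 0`: (i) the range of `ρ` is exactly `U₁°`; (ii) the map
`ker(ρ) → V`, `((v,w),w) ↦ v` is injective with image `Γ∘Σ`, so `ker(ρ) ≅ Γ∘Σ`. -/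
theorem stmt6 {V W : Type*}
    [AddCommGroup V] [Module ℝ V] [FiniteDimensional ℝ V]
    [AddCommGroup W] [Module ℝ W] [FiniteDimensional ℝ W]
    (ωV : V →ₗ[ℝ] V →ₗ[ℝ] ℝ) (ωW : W →ₗ[ℝ] W →ₗ[ℝ] ℝ)
    (haltV : ∀ v, ωV v v = 0) (hndV : ∀ v, (∀ w, ωV v w = 0) → v = 0)
    (haltW : ∀ w, ωW w w = 0) (hndW : ∀ w, (∀ w', ωW w w' = 0) → w = 0)
    (Γ : Submodule ℝ (V × W)) (hΓ : Γ = symplOrth (prodForm ωV ωW) Γ)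
    (S : Submodule ℝ W) (hS : S ≤ symplOrth ωW S)
    (hU0 : S ⊓ Γ.comap (LinearMap.inr ℝ V W) = ⊥)
    (U1 : Submodule ℝ W) (hU1 : U1 = symplOrth ωW S ⊓ Γ.comap (LinearMap.inr ℝ V W)) :
    LinearMap.range (rhoMap Γ S) = symplOrth ωW U1 ∧
    Function.Injective ((piMap Γ S).comp (LinearMap.ker (rhoMap Γ S)).subtype) ∧
    LinearMap.range ((piMap Γ S).comp (LinearMap.ker (rhoMap Γ S)).subtype) =
      gammaComp Γ S ∧
    Nonempty ((LinearMap.ker (rhoMap Γ S)) ≃ₗ[ℝ] (gammaComp Γ S)) :=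
  stmt6_general ωV ωW haltW hndW Γ hΓ S hU0 U1 hU1
end

section
/- For every real N > 0 and every c ∈ (0,1): ∫₀^c e^{−Ns} s^N ds ≤ c · e^{−N} · e^{−N(1−c)²/2}. -/
/-!
The integrand is `(s e^{-s})^N`. The function `s ↦ s e^{-s}` increases on `(-∞, 1]`, so on
`[0, c]` it is at most `c e^{-c}`, and with `x = 1 - c` the bound
`c e^{-c} ≤ e^{-1} e^{-(1-c)²/2}` is `1 - x ≤ e^{-x - x²/2}`, i.e. the first two terms of
`-log (1 - x) = ∑ xⁿ/n`. Integrating the resulting constant bound over `[0, c]` gives the claim.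
-/

open Real Set

theorem add_sq_div_two_le_neg_log_one_sub {x : ℝ} (hx0 : 0 ≤ x) (hx1 : x < 1) :
    x + x ^ 2 / 2 ≤ -log (1 - x) := by
  have hsum := hasSum_pow_div_log_of_abs_lt_one (abs_lt.2 ⟨by linarith, hx1⟩)
  have := sum_le_hasSum (Finset.range 2) (fun n _ => by positivity) hsum
  norm_num [Finset.sum_range_succ] at this
  linarith

theorem one_sub_le_exp_neg_sub_sq_div_two {x : ℝ} (hx0 : 0 ≤ x) (hx1 : x ≤ 1) :
    1 - x ≤ exp (-x - x ^ 2 / 2) := by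
  rcases hx1.lt_or_eq with hx1 | rfl
  · calc 1 - x = exp (log (1 - x)) := (exp_log (by linarith)).symm
      _ ≤ exp (-x - x ^ 2 / 2) :=
        exp_le_exp.2 (by linarith [add_sq_div_two_le_neg_log_one_sub hx0 hx1])
  · simpa using (exp_pos _).le

theorem monotoneOn_mul_exp_neg : MonotoneOn (fun x : ℝ => x * exp (-x)) (Iic 1) := by
  refine monotoneOn_of_hasDerivWithinAt_nonneg (f' := fun x => (1 - x) * exp (-x))
    (convex_Iic 1) (by fun_prop) (fun x _ => ?_) (fun x hx => ?_)
  · exact (((hasDerivAt_id' x).fun_mul (hasDerivAt_neg x).exp).congr_deriv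
      (by ring)).hasDerivWithinAt
  · rw [interior_Iic] at hx
    exact mul_nonneg (by linarith [hx.out]) (exp_pos _).le

theorem mul_exp_neg_le_exp_neg_one_sub_sq {c : ℝ} (hc0 : 0 ≤ c) (hc1 : c ≤ 1) :
    c * exp (-c) ≤ exp (-1 - (1 - c) ^ 2 / 2) := by
  have key := one_sub_le_exp_neg_sub_sq_div_two (x := 1 - c) (by linarith) (by linarith)
  rw [sub_sub_cancel] at key
  calc c * exp (-c) ≤ exp (-(1 - c) - (1 - c) ^ 2 / 2) * exp (-c) :=
        mul_le_mul_of_nonneg_right key (exp_pos _).le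
    _ = exp (-1 - (1 - c) ^ 2 / 2) := by rw [← exp_add]; ring_nf

theorem exp_neg_mul_mul_rpow_le {N s c : ℝ} (hN : 0 ≤ N) (hs : 0 ≤ s) (hsc : s ≤ c)
    (hc : c ≤ 1) :
    exp (-N * s) * s ^ N ≤ exp (-N) * exp (-N * (1 - c) ^ 2 / 2) := by
  have hbase : s * exp (-s) ≤ exp (-1 - (1 - c) ^ 2 / 2) :=
    (monotoneOn_mul_exp_neg (hsc.trans hc) hc hsc).trans
      (mul_exp_neg_le_exp_neg_one_sub_sq (hs.trans hsc) hc)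
  calc exp (-N * s) * s ^ N = (s * exp (-s)) ^ N := by
        rw [mul_rpow hs (exp_pos _).le, ← exp_mul]; ring_nf
    _ ≤ exp (-1 - (1 - c) ^ 2 / 2) ^ N := rpow_le_rpow (by positivity) hbase hN
    _ = exp (-N) * exp (-N * (1 - c) ^ 2 / 2) := by rw [← exp_mul, ← exp_add]; ring_nf

/-- For real `N > 0` and `c ∈ (0,1)`:
`∫₀^c e^{−Ns} s^N ds ≤ c e^{−N} e^{−N(1−c)²/2}`. -/
theorem stmt8 (N : ℝ) (hN : 0 < N) (c : ℝ) (hc : c ∈ Set.Ioo (0 : ℝ) 1) :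
    ∫ s in (0:ℝ)..c, Real.exp (-N * s) * s ^ N ≤
      c * Real.exp (-N) * Real.exp (-N * (1 - c) ^ 2 / 2) := by
  obtain ⟨hc0, hc1⟩ := hc
  have hbound : ∀ s ∈ uIoc 0 c,
      ‖exp (-N * s) * s ^ N‖ ≤ exp (-N) * exp (-N * (1 - c) ^ 2 / 2) := by
    intro s hs
    rw [uIoc_of_le hc0.le] at hs
    rw [Real.norm_of_nonneg (by have := hs.1.le; positivity)]
    exact exp_neg_mul_mul_rpow_le hN.le hs.1.le hs.2 hc1.le
  calc ∫ s in (0:ℝ)..c, exp (-N * s) * s ^ N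
      ≤ ‖∫ s in (0:ℝ)..c, exp (-N * s) * s ^ N‖ := le_norm_self _
    _ ≤ exp (-N) * exp (-N * (1 - c) ^ 2 / 2) * |c - 0| :=
        intervalIntegral.norm_integral_le_of_norm_le_const hbound
    _ = c * exp (-N) * exp (-N * (1 - c) ^ 2 / 2) := by rw [sub_zero, abs_of_pos hc0]; ring
end

section
/- For every ε ∈ (0,1) there exist constants C > 0 and a > 0 such that for every integer N ≥ 1 and every f ∈ ℬ_N: ∫_{|z|<1−ε} |Θ_N^⊥ f(z)|² e^{−N|z|²} dx dy ≤ C · ‖f‖² · N^{3/2} · e^{−aN}. -/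
/-!
Write `f z = ∑ aₖ zᵏ`. Cauchy's estimate on the circle of radius `r`, squared by Cauchy–Schwarz and
integrated against `r e^{-N r²} dr`, gives `|aₖ|² k! ≤ ‖f‖² N^{k+1}` for `f ∈ ℬ_N`.
For `|z| ≤ r < 1` the Chernoff-type bound `xᵏ/k! ≤ r^{2k} e^{x/r²}` at `x = N|z|²` then yields
`|aₖ zᵏ|² ≤ ‖f‖² N e^{N|z|²/r²} r^{2k}`, so `Θ_N^⊥ f(z)` is dominated by a geometric series starting
at `r^{N+1}`. After multiplying by `e^{-N|z|²}` at most `‖f‖² N (r² e^{1-r²})^N / (1-r)²` is left,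
and `r² e^{1-r²} < 1`.
-/

open MeasureTheory ComplexConjugate

/-- The `k`-th Taylor coefficient at `0` of an entire function. -/
noncomputable def taylorCoeff (f : ℂ → ℂ) (k : ℕ) : ℂ :=
  iteratedDeriv k f 0 / (k.factorial : ℂ)

/-- `Θ_N f`: truncation of the Taylor series of `f` at degree `N`. -/
noncomputable def thetaTrunc (N : ℕ) (f : ℂ → ℂ) (z : ℂ) : ℂ :=
  ∑ k ∈ Finset.range (N + 1), taylorCoeff f k * z ^ k

/-- The squared Bargmann norm `‖f‖² = (1/π)∫_ℂ |f(z)|² e^{−N|z|²} dx dy`. -/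
noncomputable def bnormSq (N : ℕ) (f : ℂ → ℂ) : ℝ :=
  (1 / Real.pi) * ∫ z : ℂ, ‖f z‖ ^ 2 * Real.exp (-(N : ℝ) * ‖z‖ ^ 2)

/-- Membership in the Bargmann space `ℬ_N`: entire with finite Bargmann norm. -/
def memBargmann (N : ℕ) (f : ℂ → ℂ) : Prop :=
  Differentiable ℂ f ∧
    Integrable (fun z : ℂ => ‖f z‖ ^ 2 * Real.exp (-(N : ℝ) * ‖z‖ ^ 2))

/-- The coherent state `φ_w(z) = N e^{N z conj w}` in the Bargmann space `ℬ_N`. -/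
noncomputable def cohState (N : ℕ) (w z : ℂ) : ℂ :=
  (N : ℂ) * Complex.exp ((N : ℂ) * z * conj w)

open Real
open scoped Nat ENNReal

lemma sq_intervalIntegral_le_mul_intervalIntegral_sq {g : ℝ → ℝ} (hg : Continuous g) {a b : ℝ}
    (hab : a ≤ b) : (∫ x in a..b, g x) ^ 2 ≤ (b - a) * ∫ x in a..b, g x ^ 2 := by
  rcases hab.eq_or_lt with rfl | hlt
  · simp
  set I := ∫ x in a..b, g x
  set c := I / (b - a)
  have hint (h : ℝ → ℝ) (hh : Continuous h) : IntervalIntegrable h volume a b :=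
    hh.intervalIntegrable a b
  have hexpand : ∫ x in a..b, (g x - c) ^ 2
      = (∫ x in a..b, g x ^ 2) - 2 * c * I + (b - a) * c ^ 2 := by
    simp_rw [sub_sq]
    rw [intervalIntegral.integral_add (hint _ (by fun_prop)) (hint _ (by fun_prop)),
      intervalIntegral.integral_sub (hint _ (by fun_prop)) (hint _ (by fun_prop)),
      intervalIntegral.integral_mul_const, intervalIntegral.integral_const_mul,
      intervalIntegral.integral_const, smul_eq_mul]
    ring
  have hnonneg := hexpand ▸ intervalIntegral.integral_nonneg hab fun x _ ↦ sq_nonneg (g x - c)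
  have hc : (b - a) * c = I := mul_div_cancel₀ _ (sub_pos.2 hlt).ne'
  nlinarith

lemma polarCoord_symm_eq_circleMap (p : ℝ × ℝ) :
    Complex.polarCoord.symm p = circleMap 0 p.1 p.2 := by
  rw [Complex.polarCoord_symm_apply, circleMap, zero_add, Complex.exp_mul_I]
  push_cast
  ring

lemma lintegral_eq_lintegral_Ioi_lintegral_circleMap {F : ℂ → ℝ≥0∞} (hF : Measurable F) :
    ∫⁻ z, F z
      = ∫⁻ r in Set.Ioi 0, ∫⁻ θ in Set.Ioo (-π) π, ENNReal.ofReal r * F (circleMap 0 r θ) := by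
  have hcont : Continuous fun p : ℝ × ℝ ↦ circleMap 0 p.1 p.2 := by
    unfold circleMap
    fun_prop
  have hmeas : Measurable fun p : ℝ × ℝ ↦ ENNReal.ofReal p.1 * F (circleMap 0 p.1 p.2) :=
    (ENNReal.measurable_ofReal.comp measurable_fst).mul (hF.comp hcont.measurable)
  simp_rw [← Complex.lintegral_comp_polarCoord_symm, polarCoord_symm_eq_circleMap,
    polarCoord_target, Measure.volume_eq_prod, ← Measure.prod_restrict, smul_eq_mul]
  exact lintegral_prod _ hmeas.aemeasurable

lemma lintegral_Ioi_pow_mul_exp_neg_mul_sq {b : ℝ} (hb : 0 < b) (k : ℕ) :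
    ∫⁻ r in Set.Ioi 0, ENNReal.ofReal (r ^ (2 * k + 1) * exp (-b * r ^ 2))
      = ENNReal.ofReal (k ! / (2 * b ^ (k + 1))) := by
  have hs : (-1 : ℝ) < (2 * k + 1 : ℕ) := neg_one_lt_zero.trans_le (Nat.cast_nonneg _)
  have hint := integrableOn_rpow_mul_exp_neg_mul_sq hb hs
  have hval := integral_rpow_mul_exp_neg_mul_rpow two_pos hs hb
  simp only [rpow_natCast, rpow_two] at hint hval
  rw [← ofReal_integral_eq_lintegral_ofReal hint
    (ae_restrict_of_forall_mem measurableSet_Ioi fun r hr ↦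
      mul_nonneg (pow_nonneg (le_of_lt hr) _) (exp_pos _).le), hval]
  have e1 : (((2 * k + 1 : ℕ) : ℝ) + 1) / 2 = (k : ℝ) + 1 := by push_cast; ring
  have e2 : -(((2 * k + 1 : ℕ) : ℝ) + 1) / 2 = -((k + 1 : ℕ) : ℝ) := by push_cast; ring
  rw [e1, e2, Gamma_nat_eq_factorial, rpow_neg hb.le, rpow_natCast]
  field_simp

lemma setIntegral_ball_le_mul_pi {g : ℂ → ℝ} {r K : ℝ} (hr₀ : 0 ≤ r) (hr₁ : r ≤ 1) (hK : 0 ≤ K)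
    (hg : ∀ z ∈ Metric.ball (0 : ℂ) r, ‖g z‖ ≤ K) : ∫ z in Metric.ball (0 : ℂ) r, g z ≤ K * π := by
  have hvol : (volume (Metric.ball (0 : ℂ) r)).toReal ≤ π := by
    rw [Complex.volume_ball, ENNReal.toReal_mul, ENNReal.toReal_pow, ENNReal.toReal_ofReal hr₀,
      ENNReal.coe_toReal, NNReal.coe_real_pi]
    exact mul_le_of_le_one_left pi_pos.le (pow_le_one₀ hr₀ hr₁)
  calc _ ≤ K * (volume (Metric.ball (0 : ℂ) r)).toReal :=
        (le_abs_self _).trans (norm_setIntegral_le_of_norm_le_const measure_ball_lt_top hg)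
    _ ≤ K * π := by gcongr

lemma pow_div_factorial_le_pow_mul_exp_div {x t : ℝ} (hx : 0 ≤ x) (ht : 0 < t) (k : ℕ) :
    x ^ k / k ! ≤ t ^ k * exp (x / t) := by
  have h := pow_div_factorial_le_exp (x / t) (div_nonneg hx ht.le) k
  rwa [div_pow, div_div, mul_comm (t ^ k), ← div_div, div_le_iff₀ (by positivity), mul_comm] at h

lemma bnormSq_nonneg (N : ℕ) (f : ℂ → ℂ) : 0 ≤ bnormSq N f :=
  mul_nonneg (by positivity) (integral_nonneg fun z ↦ by positivity)

section TaylorSeries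

variable {f : ℂ → ℂ}

lemma hasSum_taylorCoeff_mul_pow (hf : Differentiable ℂ f) (z : ℂ) :
    HasSum (fun k ↦ taylorCoeff f k * z ^ k) (f z) := by
  have hterm (k : ℕ) :
      (k.factorial : ℂ)⁻¹ • (z - 0) ^ k • iteratedDeriv k f 0 = taylorCoeff f k * z ^ k := by
    rw [taylorCoeff, sub_zero, smul_eq_mul, smul_eq_mul]
    ring
  simpa only [hterm] using Complex.hasSum_taylorSeries_of_entire hf 0 z

lemma hasSum_sub_thetaTrunc (hf : Differentiable ℂ f) (N : ℕ) (z : ℂ) :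
    HasSum (fun j ↦ taylorCoeff f (j + (N + 1)) * z ^ (j + (N + 1)))
      (f z - thetaTrunc N f z) :=
  (hasSum_nat_add_iff' (N + 1)).2 (hasSum_taylorCoeff_mul_pow hf z)

lemma norm_sub_thetaTrunc_le (hf : Differentiable ℂ f) (N : ℕ) {z : ℂ} {b r : ℝ}
    (hr₀ : 0 ≤ r) (hr₁ : r < 1) (hb : ∀ k, ‖taylorCoeff f k * z ^ k‖ ≤ b * r ^ k) :
    ‖f z - thetaTrunc N f z‖ ≤ b * r ^ (N + 1) / (1 - r) := by
  refine (hasSum_sub_thetaTrunc hf N z).norm_le_of_bounded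
    ((hasSum_geometric_of_lt_one hr₀ hr₁).mul_left (b * r ^ (N + 1))) fun j ↦ ?_
  convert hb (j + (N + 1)) using 1
  ring

lemma taylorCoeff_eq_cauchyPowerSeries (hf : Differentiable ℂ f) {R : NNReal} (hR : 0 < R)
    (k : ℕ) : taylorCoeff f k = cauchyPowerSeries f 0 R k (fun _ ↦ 1) := by
  have h := (hf.hasFPowerSeriesOnBall 0 hR).factorial_smul 1 k
  rw [← iteratedDeriv_eq_iteratedFDeriv, ← Nat.cast_smul_eq_nsmul ℂ, smul_eq_mul] at h
  rw [taylorCoeff, ← h, mul_div_cancel_left₀ _ (Nat.cast_ne_zero.2 k.factorial_ne_zero)]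

lemma norm_taylorCoeff_mul_pow_le (hf : Differentiable ℂ f) {r : ℝ} (hr : 0 < r) (k : ℕ) :
    ‖taylorCoeff f k‖ * r ^ k ≤ (2 * π)⁻¹ * ∫ θ in 0..2 * π, ‖f (circleMap 0 r θ)‖ := by
  lift r to NNReal using hr.le
  have h := (ContinuousMultilinearMap.le_opNorm (cauchyPowerSeries f 0 r k) (fun _ ↦ 1))
  rw [← taylorCoeff_eq_cauchyPowerSeries hf (mod_cast hr) k] at h
  simp only [norm_one, Finset.prod_const_one, mul_one] at h
  replace h := h.trans (norm_cauchyPowerSeries_le f 0 r k)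
  simp only [NNReal.abs_eq, inv_pow] at h
  rwa [← le_div_iff₀ (by positivity), div_eq_mul_inv]

lemma sq_norm_taylorCoeff_mul_pow_le (hf : Differentiable ℂ f) {r : ℝ} (hr : 0 < r)
    (k : ℕ) :
    2 * π * (‖taylorCoeff f k‖ * r ^ k) ^ 2 ≤ ∫ θ in (-π)..π, ‖f (circleMap 0 r θ)‖ ^ 2 := by
  have hg : Continuous fun θ ↦ ‖f (circleMap 0 r θ)‖ :=
    (hf.continuous.comp (continuous_circleMap 0 r)).norm
  have hperiod : ∫ θ in 0..2 * π, ‖f (circleMap 0 r θ)‖ ^ 2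
      = ∫ θ in (-π)..π, ‖f (circleMap 0 r θ)‖ ^ 2 := by
    have h := ((periodic_circleMap 0 r).comp fun w ↦ ‖f w‖ ^ 2).intervalIntegral_add_eq 0 (-π)
    rwa [zero_add, show -π + 2 * π = π by ring] at h
  have hcoeff := norm_taylorCoeff_mul_pow_le hf hr k
  have hCS := sq_intervalIntegral_le_mul_intervalIntegral_sq hg (by positivity : 0 ≤ 2 * π)
  rw [sub_zero, hperiod] at hCS
  have hπ : 0 < 2 * π := by positivity
  calc 2 * π * (‖taylorCoeff f k‖ * r ^ k) ^ 2
      ≤ 2 * π * ((2 * π)⁻¹ * ∫ θ in 0..2 * π, ‖f (circleMap 0 r θ)‖) ^ 2 := by gcongr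
    _ = (2 * π)⁻¹ * (∫ θ in 0..2 * π, ‖f (circleMap 0 r θ)‖) ^ 2 := by field_simp
    _ ≤ ∫ θ in (-π)..π, ‖f (circleMap 0 r θ)‖ ^ 2 := by
      rw [inv_mul_le_iff₀ hπ]; exact hCS

end TaylorSeries

section Bargmann

variable {N : ℕ} {f : ℂ → ℂ}

lemma sq_norm_taylorCoeff_mul_factorial_le (hN : 0 < N) (hf : memBargmann N f) (k : ℕ) :
    ‖taylorCoeff f k‖ ^ 2 * k ! ≤ bnormSq N f * N ^ (k + 1) := by
  obtain ⟨hdiff, hint⟩ := hf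
  set c := ‖taylorCoeff f k‖ ^ 2
  have hN' : (0 : ℝ) < N := by exact_mod_cast hN
  have hradial (r : ℝ) (hr : 0 < r) :
      ENNReal.ofReal (2 * π * c) * ENNReal.ofReal (r ^ (2 * k + 1) * exp (-N * r ^ 2))
        ≤ ∫⁻ θ in Set.Ioo (-π) π, ENNReal.ofReal r *
            ENNReal.ofReal (‖f (circleMap 0 r θ)‖ ^ 2 * exp (-N * ‖circleMap 0 r θ‖ ^ 2)) := by
    have hcont : Continuous fun θ ↦ r * (‖f (circleMap 0 r θ)‖ ^ 2 * exp (-N * r ^ 2)) := by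
      have := hdiff.continuous
      fun_prop
    have hbound := sq_norm_taylorCoeff_mul_pow_le hdiff hr k
    rw [intervalIntegral.integral_of_le (by linarith [pi_pos]), integral_Ioc_eq_integral_Ioo]
      at hbound
    simp_rw [norm_circleMap_zero, abs_of_pos hr, ← ENNReal.ofReal_mul hr.le]
    rw [← ofReal_integral_eq_lintegral_ofReal
        (hcont.integrableOn_Ioc.mono_set Set.Ioo_subset_Ioc_self)
        (ae_of_all _ fun θ ↦ by positivity),
      integral_const_mul, integral_mul_const, ← ENNReal.ofReal_mul (by positivity)]
    refine ENNReal.ofReal_le_ofReal ?_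
    calc 2 * π * c * (r ^ (2 * k + 1) * exp (-N * r ^ 2))
        = r * (2 * π * (‖taylorCoeff f k‖ * r ^ k) ^ 2 * exp (-N * r ^ 2)) := by ring
      _ ≤ _ := by gcongr
  have hF : Measurable fun z : ℂ ↦ ENNReal.ofReal (‖f z‖ ^ 2 * exp (-N * ‖z‖ ^ 2)) := by
    have := hdiff.continuous
    exact ENNReal.measurable_ofReal.comp (by fun_prop : Continuous _).measurable
  have hlower : ENNReal.ofReal (π * c * k ! / N ^ (k + 1))
      ≤ ENNReal.ofReal (∫ z, ‖f z‖ ^ 2 * exp (-N * ‖z‖ ^ 2)) :=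
    calc ENNReal.ofReal (π * c * k ! / N ^ (k + 1))
        = ENNReal.ofReal (2 * π * c) *
            ∫⁻ r in Set.Ioi 0, ENNReal.ofReal (r ^ (2 * k + 1) * exp (-N * r ^ 2)) := by
          rw [lintegral_Ioi_pow_mul_exp_neg_mul_sq hN', ← ENNReal.ofReal_mul (by positivity)]
          congr 1
          field_simp
      _ ≤ ∫⁻ r in Set.Ioi 0, ∫⁻ θ in Set.Ioo (-π) π, ENNReal.ofReal r *
            ENNReal.ofReal (‖f (circleMap 0 r θ)‖ ^ 2 * exp (-N * ‖circleMap 0 r θ‖ ^ 2)) := by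
          rw [← lintegral_const_mul' _ _ ENNReal.ofReal_ne_top]
          exact setLIntegral_mono' measurableSet_Ioi hradial
      _ = ENNReal.ofReal (∫ z, ‖f z‖ ^ 2 * exp (-N * ‖z‖ ^ 2)) := by
          rw [← lintegral_eq_lintegral_Ioi_lintegral_circleMap hF,
            ofReal_integral_eq_lintegral_ofReal hint (ae_of_all _ fun z ↦ by positivity)]
  rw [ENNReal.ofReal_le_ofReal_iff (integral_nonneg fun z ↦ by positivity),
    div_le_iff₀ (by positivity)] at hlower
  rw [bnormSq, one_div, inv_mul_eq_div, div_mul_eq_mul_div, le_div_iff₀ pi_pos]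
  linarith

lemma norm_taylorCoeff_mul_pow_le_of_memBargmann (hN : 0 < N) (hf : memBargmann N f) {r : ℝ}
    (hr : 0 < r) (z : ℂ) (k : ℕ) :
    ‖taylorCoeff f k * z ^ k‖ ≤ √(bnormSq N f * N * exp (N * ‖z‖ ^ 2 / r ^ 2)) * r ^ k := by
  have hM := bnormSq_nonneg N f
  have hcoeff : ‖taylorCoeff f k‖ ^ 2 ≤ bnormSq N f * N ^ (k + 1) / k ! := by
    rw [le_div_iff₀ (by positivity)]
    exact sq_norm_taylorCoeff_mul_factorial_le hN hf k
  rw [← sqrt_sq (norm_nonneg _), ← sqrt_sq (by positivity : 0 ≤ r ^ k), ← sqrt_mul (by positivity)]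
  refine sqrt_le_sqrt ?_
  calc ‖taylorCoeff f k * z ^ k‖ ^ 2 = ‖taylorCoeff f k‖ ^ 2 * (‖z‖ ^ 2) ^ k := by
        rw [norm_mul, norm_pow, mul_pow, ← pow_mul, ← pow_mul, mul_comm k]
    _ ≤ bnormSq N f * N ^ (k + 1) / k ! * (‖z‖ ^ 2) ^ k := by gcongr
    _ = bnormSq N f * N * ((N * ‖z‖ ^ 2) ^ k / k !) := by ring
    _ ≤ bnormSq N f * N * ((r ^ 2) ^ k * exp (N * ‖z‖ ^ 2 / r ^ 2)) := by
        gcongr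
        exact pow_div_factorial_le_pow_mul_exp_div (by positivity) (by positivity) k
    _ = bnormSq N f * N * exp (N * ‖z‖ ^ 2 / r ^ 2) * (r ^ k) ^ 2 := by ring

lemma sq_norm_sub_thetaTrunc_mul_exp_le (hN : 0 < N) (hf : memBargmann N f)
    {r : ℝ} (hr₀ : 0 < r) (hr₁ : r < 1) {z : ℂ} (hz : ‖z‖ ≤ r) :
    ‖f z - thetaTrunc N f z‖ ^ 2 * exp (-N * ‖z‖ ^ 2)
      ≤ bnormSq N f * N / (1 - r) ^ 2 * exp (-(r ^ 2 - 1 - log (r ^ 2)) * N) := by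
  have hM := bnormSq_nonneg N f
  set X := bnormSq N f * N * exp (N * ‖z‖ ^ 2 / r ^ 2)
  have htail := norm_sub_thetaTrunc_le hf.1 N hr₀.le hr₁
    (norm_taylorCoeff_mul_pow_le_of_memBargmann hN hf hr₀ z)
  have hsq : ‖f z - thetaTrunc N f z‖ ^ 2 ≤ X * (r ^ 2) ^ (N + 1) / (1 - r) ^ 2 := by
    calc ‖f z - thetaTrunc N f z‖ ^ 2 ≤ (√X * r ^ (N + 1) / (1 - r)) ^ 2 := by gcongr
      _ = X * (r ^ 2) ^ (N + 1) / (1 - r) ^ 2 := by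
        rw [div_pow, mul_pow, sq_sqrt (by positivity), ← pow_mul, ← pow_mul, mul_comm 2]
  have hexp : exp (N * ‖z‖ ^ 2 / r ^ 2) * exp (-N * ‖z‖ ^ 2) ≤ exp (N * (1 - r ^ 2)) := by
    rw [← exp_add, exp_le_exp]
    have hr2 : 0 ≤ 1 - r ^ 2 := by nlinarith
    calc N * ‖z‖ ^ 2 / r ^ 2 + -N * ‖z‖ ^ 2 = N * (1 - r ^ 2) * (‖z‖ ^ 2 / r ^ 2) := by
          field_simp; ring
      _ ≤ N * (1 - r ^ 2) * 1 := by
          gcongr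
          exact div_le_one_of_le₀ (by gcongr) (by positivity)
      _ = N * (1 - r ^ 2) := mul_one _
  have hrate : (r ^ 2) ^ N * exp (N * (1 - r ^ 2)) = exp (-(r ^ 2 - 1 - log (r ^ 2)) * N) := by
    rw [← exp_log (by positivity : 0 < r ^ 2), ← exp_nat_mul, log_exp, ← exp_add]
    ring_nf
  calc ‖f z - thetaTrunc N f z‖ ^ 2 * exp (-N * ‖z‖ ^ 2)
      ≤ X * (r ^ 2) ^ (N + 1) / (1 - r) ^ 2 * exp (-N * ‖z‖ ^ 2) := by gcongr
    _ = bnormSq N f * N / (1 - r) ^ 2 * (r ^ 2) ^ (N + 1) *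
          (exp (N * ‖z‖ ^ 2 / r ^ 2) * exp (-N * ‖z‖ ^ 2)) := by ring
    _ ≤ bnormSq N f * N / (1 - r) ^ 2 * ((r ^ 2) ^ N * exp (N * (1 - r ^ 2))) := by
        rw [mul_assoc _ ((r ^ 2) ^ (N + 1))]
        gcongr _ * ?_
        exact mul_le_mul (pow_le_pow_of_le_one (by positivity) (by nlinarith) N.le_succ) hexp
          (by positivity) (by positivity)
    _ = _ := by rw [hrate]

end Bargmann

/-- For every `ε ∈ (0,1)` there are `C, a > 0` with
`∫_{|z|<1−ε} |Θ_N^⊥ f(z)|² e^{−N|z|²} ≤ C ‖f‖² N^{3/2} e^{−aN}` for all `N ≥ 1`, `f ∈ ℬ_N`. -/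
theorem stmt11 (ε : ℝ) (hε : ε ∈ Set.Ioo (0 : ℝ) 1) :
    ∃ C > (0 : ℝ), ∃ a > (0 : ℝ), ∀ N : ℕ, 1 ≤ N → ∀ f : ℂ → ℂ, memBargmann N f →
      (∫ z in {z : ℂ | ‖z‖ < 1 - ε},
          ‖f z - thetaTrunc N f z‖ ^ 2 * Real.exp (-(N : ℝ) * ‖z‖ ^ 2)) ≤
        C * bnormSq N f * (N : ℝ) ^ ((3 : ℝ) / 2) * Real.exp (-a * N) := by
  obtain ⟨hε₀, hε₁⟩ := hε
  set r := 1 - ε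
  have hr₀ : 0 < r := by linarith
  have hr₁ : r < 1 := by linarith
  have hrate : 0 < r ^ 2 - 1 - log (r ^ 2) := by
    have := log_lt_sub_one_of_pos (by positivity : 0 < r ^ 2) (by nlinarith : r ^ 2 ≠ 1)
    linarith
  refine ⟨π / ε ^ 2, by positivity, r ^ 2 - 1 - log (r ^ 2), hrate, fun N hN f hf ↦ ?_⟩
  have hM := bnormSq_nonneg N f
  have hN32 : (N : ℝ) ≤ (N : ℝ) ^ ((3 : ℝ) / 2) := by
    simpa using rpow_le_rpow_of_exponent_le (by exact_mod_cast hN : (1 : ℝ) ≤ N)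
      (by norm_num : (1 : ℝ) ≤ 3 / 2)
  rw [← ball_zero_eq]
  calc _ ≤ bnormSq N f * N / ε ^ 2 * exp (-(r ^ 2 - 1 - log (r ^ 2)) * N) * π := by
        refine setIntegral_ball_le_mul_pi hr₀.le hr₁.le (by positivity) fun z hz ↦ ?_
        rw [norm_of_nonneg (by positivity)]
        have := sq_norm_sub_thetaTrunc_mul_exp_le hN hf hr₀ hr₁ (mem_ball_zero_iff.1 hz).le
        rwa [sub_sub_cancel] at this
    _ = π / ε ^ 2 * bnormSq N f * N * exp (-(r ^ 2 - 1 - log (r ^ 2)) * N) := by ring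
    _ ≤ _ := by gcongr
end
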